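/- Let n ∈ ℕ, m = 2n, and define 𝒟(u,v) := (2/m) Σ_{l=1}^m cos((l−1/2)πu)·cos((l−1/2)πv). Then (1/n) Σ_{j=1}^n 𝒟((j−1)/n, j/n) = 0. -/

import Mathlib

/-!
By the product-to-sum formula, `𝒟_m(u, v)` is `1/m` times the sum of the two half-integer cosine
sums `Σ_{l=1}^m cos((l - 1/2)θ)` at `θ = π(u - v)` and `θ = π(u + v)`. Multiplying such a sum by
`2 sin(θ/2)` telescopes it to `sin(mθ)`. For `u = (j-1)/n`, `v = j/n` both angles are odd multiples
of `π/n`, so with `m = 2n` we get `sin(mθ) = 0` while `sin(θ/2) ≠ 0`: every summand vanishes.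
-/

open Real Finset

/-- The SIML kernel `𝒟_m(u,v) = (2/m) Σ_{l=1}^m cos((l−1/2)πu) cos((l−1/2)πv)`. -/
noncomputable def Dker (m : ℕ) (u v : ℝ) : ℝ :=
  (2 / (m : ℝ)) * ∑ l ∈ Finset.Icc 1 m,
    Real.cos (((l : ℝ) - 1 / 2) * π * u) * Real.cos (((l : ℝ) - 1 / 2) * π * v)

theorem two_mul_sin_half_mul_sum_cos_half_odd (m : ℕ) (θ : ℝ) :
    2 * sin (θ / 2) * ∑ l ∈ Icc 1 m, cos (((l : ℝ) - 1 / 2) * θ) = sin (m * θ) := by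
  induction m with
  | zero => simp
  | succ m ih =>
    rw [sum_Icc_succ_top (by omega), mul_add, ih, two_mul_sin_mul_cos]
    have hsub : θ / 2 - (((m + 1 : ℕ) : ℝ) - 1 / 2) * θ = -(m * θ) := by push_cast; ring
    have hadd : θ / 2 + (((m + 1 : ℕ) : ℝ) - 1 / 2) * θ = ((m + 1 : ℕ) : ℝ) * θ := by
      push_cast; ring
    rw [hsub, hadd, sin_neg]
    ring

theorem sin_odd_mul_pi_div_two_mul_ne_zero {n : ℕ} (hn : n ≠ 0) {k : ℤ} (hk : Odd k) :
    sin (k * π / n / 2) ≠ 0 := by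
  rw [Ne, sin_eq_zero_iff]
  rintro ⟨z, hz⟩
  field_simp at hz
  have hzk : z * n * 2 = k := by exact_mod_cast hz
  exact Int.not_even_iff_odd.mpr hk ⟨z * n, by rw [← hzk]; ring⟩

theorem sum_cos_half_odd_mul_odd_mul_pi_div_eq_zero (n : ℕ) {k : ℤ} (hk : Odd k) :
    ∑ l ∈ Icc 1 (2 * n), cos (((l : ℝ) - 1 / 2) * (k * π / n)) = 0 := by
  rcases eq_or_ne n 0 with rfl | hn
  · simp
  have hsin : sin (((2 * n : ℕ) : ℝ) * (k * π / n)) = 0 := by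
    rw [show ((2 * n : ℕ) : ℝ) * (k * π / n) = ((2 * k : ℤ) : ℝ) * π by push_cast; field_simp]
    exact sin_int_mul_pi _
  have h := two_mul_sin_half_mul_sum_cos_half_odd (2 * n) (k * π / n)
  rw [hsin] at h
  simpa [sin_odd_mul_pi_div_two_mul_ne_zero hn hk] using h

theorem Dker_eq_sum_cos_sub_add_sum_cos_add (m : ℕ) (u v : ℝ) :
    Dker m u v = (1 / m) * (∑ l ∈ Icc 1 m, cos (((l : ℝ) - 1 / 2) * (π * (u - v))) +
      ∑ l ∈ Icc 1 m, cos (((l : ℝ) - 1 / 2) * (π * (u + v)))) := by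
  rw [Dker, ← sum_add_distrib, mul_sum, mul_sum]
  refine sum_congr rfl fun l _ => ?_
  have hsub : ((l : ℝ) - 1 / 2) * (π * (u - v)) = (l - 1 / 2) * π * u - (l - 1 / 2) * π * v := by
    ring
  have hadd : ((l : ℝ) - 1 / 2) * (π * (u + v)) = (l - 1 / 2) * π * u + (l - 1 / 2) * π * v := by
    ring
  rw [hsub, hadd, ← two_mul_cos_mul_cos]
  ring

theorem Dker_two_mul_consecutive_eq_zero (n : ℕ) (j : ℤ) :
    Dker (2 * n) ((j - 1) / n) (j / n) = 0 := by
  have hdiff : π * ((j - 1) / n - j / n) = ((-1 : ℤ) : ℝ) * π / n := by push_cast; ring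
  have hsum : π * ((j - 1) / n + j / n) = ((2 * j - 1 : ℤ) : ℝ) * π / n := by push_cast; ring
  rw [Dker_eq_sum_cos_sub_add_sum_cos_add, hdiff, hsum,
    sum_cos_half_odd_mul_odd_mul_pi_div_eq_zero n (by decide),
    sum_cos_half_odd_mul_odd_mul_pi_div_eq_zero n (by simp), add_zero, mul_zero]

theorem stmt8 (n : ℕ) :
    (1 / (n : ℝ)) * ∑ j ∈ Finset.Icc 1 n,
      Dker (2 * n) (((j : ℝ) - 1) / n) ((j : ℝ) / n) = 0 := by
  rw [sum_eq_zero fun (j : ℕ) _ => by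
    simpa using Dker_two_mul_consecutive_eq_zero n j, mul_zero]
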